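/- If N is a negative definite kernel on X, then for every t ≥ 0 the kernel 1 − e^{−tN} is negative definite. -/

import Mathlib

open Filter MeasureTheory

def IsPosDefKernel {X : Type*} (K : X → X → ℝ) : Prop :=
  (∀ x y, K x y = K y x) ∧
  ∀ (n : ℕ) (x : Fin n → X) (c : Fin n → ℝ),
    0 ≤ ∑ i, ∑ j, K (x i) (x j) * c i * c j

def IsNegDefKernel {X : Type*} (N : X → X → ℝ) : Prop :=
  (∀ x y, N x y = N y x) ∧
  ∀ (n : ℕ) (x : Fin n → X) (c : Fin n → ℝ), (∑ i, c i) = 0 →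
    ∑ i, ∑ j, N (x i) (x j) * c i * c j ≤ 0

def IsCoarseEmbedding {X Y : Type*} [PseudoMetricSpace X] [PseudoMetricSpace Y]
    (f : X → Y) : Prop :=
  ∃ ρ₁ ρ₂ : ℝ → ℝ, MonotoneOn ρ₁ (Set.Ici 0) ∧ MonotoneOn ρ₂ (Set.Ici 0) ∧
    (∀ x y, ρ₁ (dist x y) ≤ dist (f x) (f y) ∧ dist (f x) (f y) ≤ ρ₂ (dist x y)) ∧
    Tendsto ρ₁ atTop atTop

section Aux

open Matrix

variable {n : ℕ}

private lemma form_psd {M : Matrix (Fin n) (Fin n) ℝ} (hsym : ∀ i j, M i j = M j i)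
    (h : ∀ c : Fin n → ℝ, 0 ≤ ∑ i, ∑ j, M i j * c i * c j) : M.PosSemidef := by
  rw [Matrix.posSemidef_iff_dotProduct_mulVec]
  constructor
  · ext i j
    simp [Matrix.conjTranspose_apply, hsym j i]
  · intro c
    have e : dotProduct (star c) (M *ᵥ c) = ∑ i, ∑ j, M i j * c i * c j := by
      simp only [dotProduct, Matrix.mulVec, star_trivial, Finset.mul_sum]
      exact Finset.sum_congr rfl fun i _ => Finset.sum_congr rfl fun j _ => by ring
    rw [e]; exact h c

private lemma schur_form {L M : Matrix (Fin n) (Fin n) ℝ}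
    (hL : ∀ c : Fin n → ℝ, 0 ≤ ∑ i, ∑ j, L i j * c i * c j) (hM : M.PosSemidef)
    (c : Fin n → ℝ) : 0 ≤ ∑ i, ∑ j, L i j * M i j * c i * c j := by
  obtain ⟨B, rfl⟩ : ∃ B : Matrix (Fin n) (Fin n) ℝ, M = Bᴴ * B := by
    open scoped MatrixOrder in exact CStarAlgebra.nonneg_iff_eq_star_mul_self.mp hM.nonneg
  have key : (∑ i, ∑ j, L i j * (Bᴴ * B) i j * c i * c j)
      = ∑ k, ∑ i, ∑ j, L i j * (B k i * c i) * (B k j * c j) := by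
    have hentry : ∀ i j, (Bᴴ * B) i j = ∑ k, B k i * B k j := by
      intro i j; simp [Matrix.mul_apply, Matrix.conjTranspose_apply]
    calc (∑ i, ∑ j, L i j * (Bᴴ * B) i j * c i * c j)
        = ∑ i, ∑ j, ∑ k, L i j * (B k i * c i) * (B k j * c j) := by
          refine Finset.sum_congr rfl fun i _ => Finset.sum_congr rfl fun j _ => ?_
          rw [hentry, Finset.mul_sum, Finset.sum_mul, Finset.sum_mul]
          exact Finset.sum_congr rfl fun k _ => by ring
      _ = ∑ i, ∑ k, ∑ j, L i j * (B k i * c i) * (B k j * c j) :=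
          Finset.sum_congr rfl fun i _ => Finset.sum_comm
      _ = ∑ k, ∑ i, ∑ j, L i j * (B k i * c i) * (B k j * c j) := Finset.sum_comm
  rw [key]
  exact Finset.sum_nonneg fun k _ => hL fun i => B k i * c i

private lemma hpow_form {M : Matrix (Fin n) (Fin n) ℝ} (hsym : ∀ i j, M i j = M j i)
    (h : ∀ c : Fin n → ℝ, 0 ≤ ∑ i, ∑ j, M i j * c i * c j) (k : ℕ)
    (c : Fin n → ℝ) : 0 ≤ ∑ i, ∑ j, (M i j) ^ k * c i * c j := by
  induction k generalizing c with
  | zero =>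
    have e : (∑ i, ∑ j, (M i j) ^ 0 * c i * c j) = (∑ i, c i) * (∑ j, c j) := by
      rw [Finset.sum_mul_sum]
      exact Finset.sum_congr rfl fun i _ => Finset.sum_congr rfl fun j _ => by ring
    rw [e]
    exact mul_self_nonneg _
  | succ k ih =>
    have e : (∑ i, ∑ j, (M i j) ^ (k + 1) * c i * c j)
        = ∑ i, ∑ j, (M i j) ^ k * M i j * c i * c j :=
      Finset.sum_congr rfl fun i _ => Finset.sum_congr rfl fun j _ => by rw [pow_succ]
    rw [e]
    exact schur_form ih (form_psd hsym h) c

private lemma exp_form {M : Matrix (Fin n) (Fin n) ℝ} (hsym : ∀ i j, M i j = M j i)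
    (h : ∀ c : Fin n → ℝ, 0 ≤ ∑ i, ∑ j, M i j * c i * c j)
    (c : Fin n → ℝ) : 0 ≤ ∑ i, ∑ j, Real.exp (M i j) * c i * c j := by
  have htend : Tendsto
      (fun m => ∑ i, ∑ j, (∑ k ∈ Finset.range m, (M i j) ^ k / k.factorial) * c i * c j)
      atTop (nhds (∑ i, ∑ j, Real.exp (M i j) * c i * c j)) := by
    refine tendsto_finset_sum _ fun i _ => tendsto_finset_sum _ fun j _ => ?_
    have hexp : Tendsto (fun m => ∑ k ∈ Finset.range m, (M i j) ^ k / k.factorial)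
        atTop (nhds (Real.exp (M i j))) := by
      rw [Real.exp_eq_exp_ℝ, NormedSpace.exp_eq_tsum_div]
      exact (NormedSpace.expSeries_div_summable (M i j)).hasSum.tendsto_sum_nat
    exact (hexp.mul_const _).mul_const _
  refine ge_of_tendsto' htend fun m => ?_
  have key : (∑ i, ∑ j, (∑ k ∈ Finset.range m, (M i j) ^ k / k.factorial) * c i * c j)
      = ∑ k ∈ Finset.range m,
          (∑ i, ∑ j, (M i j) ^ k * c i * c j) * ((k.factorial : ℝ))⁻¹ := by
    calc (∑ i, ∑ j, (∑ k ∈ Finset.range m, (M i j) ^ k / k.factorial) * c i * c j)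
        = ∑ i, ∑ j, ∑ k ∈ Finset.range m,
            ((M i j) ^ k * c i * c j) * ((k.factorial : ℝ))⁻¹ := by
          refine Finset.sum_congr rfl fun i _ => Finset.sum_congr rfl fun j _ => ?_
          rw [Finset.sum_mul, Finset.sum_mul]
          exact Finset.sum_congr rfl fun k _ => by rw [div_eq_mul_inv]; ring
      _ = ∑ i, ∑ k ∈ Finset.range m, ∑ j,
            ((M i j) ^ k * c i * c j) * ((k.factorial : ℝ))⁻¹ :=
          Finset.sum_congr rfl fun i _ => Finset.sum_comm
      _ = ∑ k ∈ Finset.range m, ∑ i, ∑ j,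
            ((M i j) ^ k * c i * c j) * ((k.factorial : ℝ))⁻¹ := Finset.sum_comm
      _ = _ := by
          refine Finset.sum_congr rfl fun k _ => ?_
          rw [Finset.sum_mul]
          refine Finset.sum_congr rfl fun i _ => ?_
          rw [Finset.sum_mul]
  rw [key]
  refine Finset.sum_nonneg fun k _ => mul_nonneg (hpow_form hsym h k c) (by positivity)

end Aux

theorem negDef_one_sub_exp {X : Type*} (N : X → X → ℝ) (hN : IsNegDefKernel N)
    (t : ℝ) (ht : 0 ≤ t) :
    IsNegDefKernel (fun x y => 1 - Real.exp (-t * N x y)) := by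
  obtain ⟨hsymN, hformN⟩ := hN
  constructor
  · intro x y
    simp [hsymN x y]
  · rintro n x c hc
    -- reduce to nonnegativity of the exponential kernel form
    have reduce : (∑ i, ∑ j, (fun x y => 1 - Real.exp (-t * N x y)) (x i) (x j) * c i * c j)
        = (∑ i, c i) * (∑ j, c j) - ∑ i, ∑ j, Real.exp (-t * N (x i) (x j)) * c i * c j := by
      rw [Finset.sum_mul_sum, ← Finset.sum_sub_distrib]
      refine Finset.sum_congr rfl fun i _ => ?_
      rw [← Finset.sum_sub_distrib]
      exact Finset.sum_congr rfl fun j _ => by ring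
    rw [reduce, hc, zero_mul, zero_sub, neg_nonpos]
    -- now show 0 ≤ ∑ i, ∑ j, exp (-t * N (x i) (x j)) * c i * c j
    match n, x, c with
    | 0, x, c => simp
    | (m + 1), x, c =>
      set x₀ : X := x 0 with hx₀
      set K : Matrix (Fin (m + 1)) (Fin (m + 1)) ℝ :=
        fun i j => t * (N (x i) x₀ + N (x j) x₀ - N (x i) (x j) - N x₀ x₀) with hK
      have hKsym : ∀ i j, K i j = K j i := by
        intro i j; simp only [hK]; rw [hsymN (x i) (x j)]; ring
      have hKform : ∀ d : Fin (m + 1) → ℝ, 0 ≤ ∑ i, ∑ j, K i j * d i * d j := by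
        intro d
        set s : ℝ := ∑ i, d i with hs
        set A : ℝ := ∑ i, N (x i) x₀ * d i with hA
        set B : ℝ := ∑ i, ∑ j, N (x i) (x j) * d i * d j with hB
        set y : Fin (m + 2) → X := Fin.cons x₀ x with hy
        set e : Fin (m + 2) → ℝ := Fin.cons (-s) d with he
        -- apply negative definiteness to the extended family
        have hext := hformN (m + 2) y e
          (by rw [he, Fin.sum_cons, hs]; ring)
        have hrow : ∀ i : Fin (m + 2), (∑ j : Fin (m + 2), N (y i) (y j) * e i * e j)
            = N (y i) x₀ * e i * (-s)
              + ∑ j : Fin (m + 1), N (y i) (x j) * e i * d j := by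
          intro i
          rw [Fin.sum_univ_succ]
          simp [hy, he]
        have hexp : (∑ i : Fin (m + 2), ∑ j : Fin (m + 2), N (y i) (y j) * e i * e j)
            = N x₀ x₀ * s * s - s * A - s * A + B := by
          rw [Fin.sum_univ_succ, hrow]
          have hy0 : y 0 = x₀ := by simp [hy]
          have he0 : e 0 = -s := by simp [he]
          have hys : ∀ i : Fin (m + 1), y i.succ = x i := by intro i; simp [hy]
          have hes : ∀ i : Fin (m + 1), e i.succ = d i := by intro i; simp [he]
          have e1 : (∑ j : Fin (m + 1), N (y 0) (x j) * e 0 * d j) = (-s) * A := by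
            rw [hA, Finset.mul_sum]
            refine Finset.sum_congr rfl fun j _ => ?_
            rw [hy0, he0, hsymN x₀ (x j)]; ring
          have e3 : (∑ i : Fin (m + 1), ∑ j : Fin (m + 2),
              N (y i.succ) (y j) * e i.succ * e j) = -s * A + B := by
            have erow : ∀ i : Fin (m + 1), (∑ j : Fin (m + 2),
                N (y i.succ) (y j) * e i.succ * e j)
                = N (x i) x₀ * d i * (-s) + ∑ j : Fin (m + 1), N (x i) (x j) * d i * d j := by
              intro i
              rw [hrow]
              simp only [hys, hes]
            calc (∑ i : Fin (m + 1), ∑ j : Fin (m + 2), N (y i.succ) (y j) * e i.succ * e j)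
                = ∑ i : Fin (m + 1), (N (x i) x₀ * d i * (-s)
                    + ∑ j : Fin (m + 1), N (x i) (x j) * d i * d j) :=
                  Finset.sum_congr rfl fun i _ => erow i
              _ = -s * A + B := by
                  rw [Finset.sum_add_distrib, hB, hA, Finset.mul_sum]
                  congr 1
                  exact Finset.sum_congr rfl fun i _ => by ring
          rw [e1, e3, hy0, he0]
          ring
        rw [hexp] at hext
        have S1 : (∑ i, ∑ j, N (x i) x₀ * d i * d j) = A * s := by
          rw [hA, Finset.sum_mul]
          refine Finset.sum_congr rfl fun i _ => ?_
          rw [hs, Finset.mul_sum]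
        have S2 : (∑ i, ∑ j, N (x j) x₀ * d i * d j) = s * A := by
          calc (∑ i, ∑ j, N (x j) x₀ * d i * d j)
              = ∑ j, ∑ i, N (x j) x₀ * d i * d j := Finset.sum_comm
            _ = ∑ j, N (x j) x₀ * d j * s := by
                refine Finset.sum_congr rfl fun j _ => ?_
                rw [hs, Finset.mul_sum]
                exact Finset.sum_congr rfl fun i _ => by ring
            _ = s * A := by
                rw [hA, Finset.mul_sum]
                exact Finset.sum_congr rfl fun j _ => by ring
        have S4 : (∑ i : Fin (m + 1), ∑ j : Fin (m + 1), N x₀ x₀ * d i * d j)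
            = N x₀ x₀ * s * s := by
          calc (∑ i : Fin (m + 1), ∑ j : Fin (m + 1), N x₀ x₀ * d i * d j)
              = ∑ i : Fin (m + 1), N x₀ x₀ * d i * s := by
                refine Finset.sum_congr rfl fun i _ => ?_
                rw [hs, Finset.mul_sum]
            _ = N x₀ x₀ * s * s := by
                rw [hs, Finset.mul_sum]
                exact Finset.sum_congr rfl fun i _ => by ring
        have hKval : (∑ i, ∑ j, K i j * d i * d j)
            = t * (s * A + s * A - B - N x₀ x₀ * s * s) := by
          calc (∑ i, ∑ j, K i j * d i * d j)
              = ∑ i, ∑ j, (t * (N (x i) x₀ * d i * d j) + t * (N (x j) x₀ * d i * d j)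
                  - t * (N (x i) (x j) * d i * d j) - t * (N x₀ x₀ * d i * d j)) := by
                refine Finset.sum_congr rfl fun i _ => Finset.sum_congr rfl fun j _ => ?_
                simp only [hK]; ring
            _ = t * (∑ i, ∑ j, N (x i) x₀ * d i * d j)
                  + t * (∑ i, ∑ j, N (x j) x₀ * d i * d j)
                  - t * (∑ i, ∑ j, N (x i) (x j) * d i * d j)
                  - t * (∑ i, ∑ j, N x₀ x₀ * d i * d j) := by
                simp only [Finset.sum_add_distrib, Finset.sum_sub_distrib, Finset.mul_sum]
            _ = t * (A * s) + t * (s * A) - t * B - t * (N x₀ x₀ * s * s) := by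
                rw [S1, S2, ← hB, S4]
            _ = t * (s * A + s * A - B - N x₀ x₀ * s * s) := by ring
        rw [hKval]
        have hq : (0 : ℝ) ≤ s * A + s * A - B - N x₀ x₀ * s * s := by linarith
        exact mul_nonneg ht hq
      -- factor the exponential kernel
      set g : Fin (m + 1) → ℝ := fun i => Real.exp (-t * N (x i) x₀) with hg
      have hfact : ∀ i j, Real.exp (-t * N (x i) (x j)) * c i * c j
          = (Real.exp (K i j) * (g i * c i) * (g j * c j)) * Real.exp (t * N x₀ x₀) := by
        intro i j
        have h1 : Real.exp (-t * N (x i) (x j))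
            = Real.exp (K i j) * g i * g j * Real.exp (t * N x₀ x₀) := by
          simp only [hK, hg]
          rw [← Real.exp_add, ← Real.exp_add, ← Real.exp_add]
          congr 1
          ring
        rw [h1]; ring
      have hfinal : (∑ i, ∑ j, Real.exp (-t * N (x i) (x j)) * c i * c j)
          = (∑ i, ∑ j, Real.exp (K i j) * (g i * c i) * (g j * c j))
              * Real.exp (t * N x₀ x₀) := by
        rw [Finset.sum_mul]
        refine Finset.sum_congr rfl fun i _ => ?_
        rw [Finset.sum_mul]
        exact Finset.sum_congr rfl fun j _ => hfact i j
      rw [hfinal]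
      exact mul_nonneg (exp_form hKsym hKform fun i => g i * c i) (Real.exp_pos _).le
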